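/- arXiv:math/0509126 — 3 statements merged into one kernel-verified Lean document; each statement's English description precedes it below -/
import Mathlib

section
/- Let K have characteristic zero and let (A,C,ρ) be a good binomial system, i.e., a binomial system such that b_i = c_i for all 1 ≤ i < m(ρ) and all b, c ∈ C. Then for every unipotent upper triangular matrix g ∈ GL(n,K) (ones on the diagonal), g(F(A,C,ρ)) = F(A,C,ρ). -/
open MvPolynomial

namespace Fumasoli

/-- The `i`-th standard basis exponent vector `e_i`. -/
def stdExp (ν : ℕ) (i : Fin ν) : Fin ν → ℕ := fun k => if k = i then 1 else 0

/-- The Borel order: `a ≥_Bor b` iff `a - b` is a nonnegative integer combination of the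
vectors `e_j - e_{j+1}` for `1 ≤ j < ν`.  Here `α` records the coefficients, with
`α 0 = 0` and `α j = 0` for `j ≥ ν`, and component `i` (0-indexed) of `a - b` equals
`α (i+1) - α i`. -/
def BorelGE {ν : ℕ} (a b : Fin ν → ℕ) : Prop :=
  ∃ α : ℕ → ℕ, α 0 = 0 ∧ (∀ j, ν ≤ j → α j = 0) ∧
    ∀ i : Fin ν, (a i : ℤ) - (b i : ℤ) = (α (i.val + 1) : ℤ) - (α i.val : ℤ)

/-- `M` is an upper triangular matrix of nonnegative integers with row sums `a` and
column sums `b`, i.e. `M ∈ U(a,b)`. -/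
def IsTransferMatrix {ν : ℕ} (M : Matrix (Fin ν) (Fin ν) ℕ) (a b : Fin ν → ℕ) : Prop :=
  (∀ i j : Fin ν, (j : ℕ) < (i : ℕ) → M i j = 0) ∧
  (∀ j, ∑ i, M i j = b j) ∧ (∀ i, ∑ j, M i j = a i)

/-- Integer-matrix version of `IsTransferMatrix`, with integer row and column sums. -/
def IsTransferMatrixZ {ν : ℕ} (M : Matrix (Fin ν) (Fin ν) ℤ) (a b : Fin ν → ℤ) : Prop :=
  (∀ i j : Fin ν, (j : ℕ) < (i : ℕ) → M i j = 0) ∧ (∀ i j : Fin ν, 0 ≤ M i j) ∧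
  (∀ j, ∑ i, M i j = b j) ∧ (∀ i, ∑ j, M i j = a i)

/-- `m(ρ)`: the largest (1-indexed) position where `ρ` is nonzero, or `1` if `ρ = 0`. -/
def mIdx {ν : ℕ} (ρ : Fin ν → ℤ) : ℕ :=
  max 1 ((Finset.univ.filter fun i => ρ i ≠ 0).sup fun i => (i : ℕ) + 1)

/-- `ρ_{m(ρ)} > 0`, expressed via the (1-indexed) position `m(ρ)`. -/
def mPos {ν : ℕ} (ρ : Fin ν → ℤ) : Prop :=
  ∃ i : Fin ν, (i : ℕ) + 1 = mIdx ρ ∧ 0 < ρ i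

/-- A term order on exponent vectors: a translation-invariant strict linear order. -/
structure TermOrder (ν : ℕ) where
  lt : (Fin ν → ℕ) → (Fin ν → ℕ) → Prop
  irrefl : ∀ a, ¬ lt a a
  trans : ∀ a b c, lt a b → lt b c → lt a c
  total : ∀ a b, lt a b ∨ a = b ∨ lt b a
  add_right : ∀ a b c, lt a b → lt (a + c) (b + c)

/-- Admissibility of a term order: `X_1 > X_2 > ⋯ > X_ν` and it refines total degree. -/
def TermOrder.IsAdmissible {ν : ℕ} (τ : TermOrder ν) : Prop :=
  (∀ i j : Fin ν, i < j → τ.lt (stdExp ν j) (stdExp ν i)) ∧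
  (∀ a b : Fin ν → ℕ, (∑ i, a i) < (∑ i, b i) → τ.lt a b)

/-- The (degree) reverse lexicographic order: `a < b` iff `deg a < deg b`, or the degrees
agree and the last position where `a` and `b` differ has `a` strictly bigger there. -/
def rlexLT {ν : ℕ} (a b : Fin ν → ℕ) : Prop :=
  (∑ i, a i) < (∑ i, b i) ∨
  ((∑ i, a i) = (∑ i, b i) ∧ ∃ k : Fin ν, b k < a k ∧ ∀ j : Fin ν, k < j → a j = b j)

/-- Exponent vector as a finitely supported function. -/
noncomputable def expF {ν : ℕ} (a : Fin ν → ℕ) : Fin ν →₀ ℕ := Finsupp.equivFunOnFinite.symm a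

/-- The monomial `X^a`. -/
noncomputable def mono (K : Type*) [CommSemiring K] {ν : ℕ} (a : Fin ν → ℕ) :
    MvPolynomial (Fin ν) K := monomial (expF a) 1

/-- `m` is the leading monomial (w.r.t. the strict order `lt`) of `f`. -/
def IsLeadOf {K : Type*} [CommSemiring K] {ν : ℕ}
    (lt : (Fin ν → ℕ) → (Fin ν → ℕ) → Prop)
    (f : MvPolynomial (Fin ν) K) (m : Fin ν →₀ ℕ) : Prop :=
  m ∈ f.support ∧ ∀ m' ∈ f.support, m' ≠ m → lt (⇑m') (⇑m)

/-- The initial ideal of `I` w.r.t. the strict order `lt`: generated by the leading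
monomials of the nonzero elements of `I`. -/
noncomputable def initialIdeal {K : Type*} [CommSemiring K] {ν : ℕ}
    (lt : (Fin ν → ℕ) → (Fin ν → ℕ) → Prop)
    (I : Ideal (MvPolynomial (Fin ν) K)) : Ideal (MvPolynomial (Fin ν) K) :=
  Ideal.span {p | ∃ f ∈ I, f ≠ 0 ∧ ∃ m, IsLeadOf lt f m ∧ p = monomial m (1 : K)}

/-- `G` is a Gröbner basis of `I` w.r.t. `lt`: the elements of `G` lie in `I` and their
leading monomials generate the initial ideal of `I`. -/
noncomputable def IsGroebnerBasis {K : Type*} [CommSemiring K] {ν : ℕ}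
    (lt : (Fin ν → ℕ) → (Fin ν → ℕ) → Prop)
    (G : Set (MvPolynomial (Fin ν) K)) (I : Ideal (MvPolynomial (Fin ν) K)) : Prop :=
  (∀ g ∈ G, g ∈ I) ∧
    initialIdeal lt I =
      Ideal.span {p | ∃ g ∈ G, g ≠ 0 ∧ ∃ m, IsLeadOf lt g m ∧ p = monomial m (1 : K)}

/-- The irrelevant maximal ideal `(X_1, …, X_ν)`. -/
noncomputable def irrelIdeal (K : Type*) [CommSemiring K] (ν : ℕ) :
    Ideal (MvPolynomial (Fin ν) K) := Ideal.span (Set.range X)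

/-- Saturation of `I` with respect to the irrelevant maximal ideal. -/
noncomputable def satIdeal {K : Type*} [CommRing K] {ν : ℕ}
    (I : Ideal (MvPolynomial (Fin ν) K)) : Ideal (MvPolynomial (Fin ν) K) :=
  ⨆ k : ℕ, Submodule.colon I ((irrelIdeal K ν ^ k : Ideal (MvPolynomial (Fin ν) K)) : Set (MvPolynomial (Fin ν) K))

/-- Saturation (colon) of `I` with respect to powers of the variable `X_v`. -/
noncomputable def satVar {K : Type*} [CommRing K] {ν : ℕ}
    (I : Ideal (MvPolynomial (Fin ν) K)) (v : Fin ν) : Ideal (MvPolynomial (Fin ν) K) :=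
  ⨆ k : ℕ, Submodule.colon I (Ideal.span {(X v : MvPolynomial (Fin ν) K) ^ k})

/-- The linear change of coordinates by the matrix `g`: `X_j ↦ Σ_i g_{ij} X_i`. -/
noncomputable def actMat (K : Type*) [CommRing K] {ν : ℕ}
    (g : Matrix (Fin ν) (Fin ν) K) :
    MvPolynomial (Fin ν) K →ₐ[K] MvPolynomial (Fin ν) K :=
  aeval fun j => ∑ i, C (g i j) * X i

/-- `g` is unipotent upper triangular. -/
def IsUnipotent {K : Type*} [CommRing K] {ν : ℕ} (g : Matrix (Fin ν) (Fin ν) K) : Prop :=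
  (∀ i j : Fin ν, j < i → g i j = 0) ∧ ∀ i, g i i = 1

/-- `J` is the generic initial ideal of `I` w.r.t. the order `lt`: there is a nonzero
polynomial `h` in the matrix entries such that `in(g(I)) = J` for every invertible `g`
with `h(g) ≠ 0` (a dense Zariski-open set of coordinate changes). -/
noncomputable def IsGin {K : Type*} [CommRing K] {ν : ℕ}
    (lt : (Fin ν → ℕ) → (Fin ν → ℕ) → Prop)
    (I J : Ideal (MvPolynomial (Fin ν) K)) : Prop :=
  ∃ h : MvPolynomial (Fin ν × Fin ν) K, h ≠ 0 ∧
    ∀ g : Matrix (Fin ν) (Fin ν) K, IsUnit g.det →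
      MvPolynomial.eval (fun p => g p.1 p.2) h ≠ 0 →
      initialIdeal lt (Ideal.map (actMat K g) I) = J

/-- `I` is a homogeneous ideal. -/
def IsHomog {K : Type*} [CommSemiring K] {ν : ℕ}
    (I : Ideal (MvPolynomial (Fin ν) K)) : Prop :=
  ∀ f ∈ I, ∀ d : ℕ, homogeneousComponent d f ∈ I

/-- `c + ρ`, as a vector of natural numbers. -/
def shiftVec {ν : ℕ} (ρ : Fin ν → ℤ) (c : Fin ν → ℕ) : Fin ν → ℕ :=
  fun i => ((c i : ℤ) + ρ i).toNat

/-- The set `C + ρ`. -/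
def shiftSet {ν : ℕ} (C : Set (Fin ν → ℕ)) (ρ : Fin ν → ℤ) : Set (Fin ν → ℕ) :=
  {x | ∃ c ∈ C, ∀ i, (x i : ℤ) = (c i : ℤ) + ρ i}

/-- A Borel set: upwards closed under the Borel order. -/
def IsBorelSet {ν : ℕ} (B : Set (Fin ν → ℕ)) : Prop :=
  ∀ a b : Fin ν → ℕ, BorelGE a b → b ∈ B → a ∈ B

/-- `(A, C, ρ)` is a binomial system of degree `d` in `ν` indeterminates. -/
def IsBinomialSystem {ν : ℕ} (d : ℕ) (A C : Set (Fin ν → ℕ)) (ρ : Fin ν → ℤ) : Prop :=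
  (∀ a ∈ A, ∑ i, a i = d) ∧ (∀ c ∈ C, ∑ i, c i = d) ∧
  (∀ c ∈ C, ∀ i, 0 ≤ (c i : ℤ) + ρ i) ∧ (∀ c ∈ C, (∑ i, ((c i : ℤ) + ρ i)) = (d : ℤ)) ∧
  A ∩ C = ∅ ∧ A ∩ shiftSet C ρ = ∅ ∧ C ∩ shiftSet C ρ = ∅ ∧
  IsBorelSet (A ∪ C) ∧ IsBorelSet (A ∪ shiftSet C ρ)

/-- The ideal `F(A,C,ρ)`, generated by the monomials `X^a` (`a ∈ A`) and the binomials
`X^c - X^{c+ρ}` (`c ∈ C`). -/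
noncomputable def Fideal (K : Type*) [CommRing K] {ν : ℕ}
    (A C : Set (Fin ν → ℕ)) (ρ : Fin ν → ℤ) : Ideal (MvPolynomial (Fin ν) K) :=
  Ideal.span ((fun a => mono K a) '' A ∪ (fun c => mono K c - mono K (shiftVec ρ c)) '' C)

/-- Restriction `A_i` of a set of exponent vectors to the first `i` indeterminates:
`A_i = {x : x extended by zeros lies in A}`. -/
def restrSet {ν : ℕ} (i : ℕ) (A : Set (Fin ν → ℕ)) : Set (Fin i → ℕ) :=
  {x | (fun j : Fin ν => if hj : (j : ℕ) < i then x ⟨j, hj⟩ else 0) ∈ A}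

/-- The inclusion `K[X_1,…,X_i] → K[X_1,…,X_ν]`. -/
noncomputable def inclAlg (K : Type*) [CommSemiring K] {i ν : ℕ} (h : i ≤ ν) :
    MvPolynomial (Fin i) K →ₐ[K] MvPolynomial (Fin ν) K :=
  rename (Fin.castLE h)

/-- Dimension of a module: Krull dimension of `R` modulo the annihilator. -/
noncomputable def moduleDim (R M : Type*) [CommRing R] [AddCommGroup M] [Module R M] :
    WithBot (WithTop ℕ) :=
  ringKrullDim (R ⧸ Module.annihilator R M)

/-- `M` is a Cohen-Macaulay module of dimension `t` (relative to the ideal `I`):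
its dimension is `t` and there is a regular sequence on `M` of length `t` inside `I`. -/
def IsCMofDim {R : Type*} [CommRing R] (I : Ideal R) (M : Type*)
    [AddCommGroup M] [Module R M] (t : ℕ) : Prop :=
  moduleDim R M = (t : WithBot (WithTop ℕ)) ∧
    ∃ rs : List R, rs.length = t ∧ (∀ r ∈ rs, r ∈ I) ∧ RingTheory.Sequence.IsRegular M rs

/-- The quotient module `J / J'` of an ideal by a subideal. -/
noncomputable def idealQuot {R : Type*} [CommRing R] (J J' : Ideal R) :=
  J ⧸ (Submodule.comap (Submodule.subtype J) (J' : Submodule R R))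

noncomputable instance idealQuotAddCommGroup {R : Type*} [CommRing R] (J J' : Ideal R) :
    AddCommGroup (idealQuot J J') := by unfold idealQuot; infer_instance

noncomputable instance idealQuotModule {R : Type*} [CommRing R] (J J' : Ideal R) :
    Module R (idealQuot J J') := by unfold idealQuot; infer_instance

/-- A homogeneous ideal `𝔞` is sequentially Cohen-Macaulay: there is a finite strictly
increasing filtration `𝔞 = J_0 ⊊ J_1 ⊊ ⋯ ⊊ J_r = S` by homogeneous ideals such that each
quotient `J_{i+1}/J_i` is Cohen-Macaulay and the dimensions strictly increase. -/
noncomputable def IsSeqCM {K : Type*} [CommRing K] {ν : ℕ}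
    (I : Ideal (MvPolynomial (Fin ν) K)) : Prop :=
  ∃ (r : ℕ) (J : Fin (r + 1) → Ideal (MvPolynomial (Fin ν) K)) (t : Fin r → ℕ),
    J 0 = I ∧ J (Fin.last r) = ⊤ ∧ (∀ i, IsHomog (J i)) ∧
    (∀ i : Fin r, J i.castSucc < J i.succ) ∧
    (∀ i : Fin r, IsCMofDim (irrelIdeal K ν) (idealQuot (J i.succ) (J i.castSucc)) (t i)) ∧
    StrictMono t


/-- `μ_M`: the product over the columns of `M` of the multinomial coefficients of the
column entries. -/
def muM {ν : ℕ} (M : Matrix (Fin ν) (Fin ν) ℕ) : ℕ :=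
  ∏ j, Nat.multinomial Finset.univ (fun i => M i j)

/-- `M + ρ`: add `ρ_j` to the `j`-th diagonal entry of `M` (as a matrix of naturals). -/
def addDiag {ν : ℕ} (M : Matrix (Fin ν) (Fin ν) ℕ) (ρ : Fin ν → ℤ) :
    Matrix (Fin ν) (Fin ν) ℕ :=
  fun i j => if i = j then ((M i j : ℤ) + ρ i).toNat else M i j

/-- `I` is a monomial ideal. -/
def IsMonomialIdeal {K : Type*} [CommSemiring K] {ν : ℕ}
    (I : Ideal (MvPolynomial (Fin ν) K)) : Prop :=
  ∀ f ∈ I, ∀ m ∈ f.support, monomial m (1 : K) ∈ I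

/-- Borel property of a monomial ideal: if `X^m ∈ I` and `X_j` divides `X^m`, then
`(X_i/X_j)·X^m ∈ I` for all `i ≤ j`. -/
def IsBorelIdeal {K : Type*} [CommSemiring K] {ν : ℕ}
    (I : Ideal (MvPolynomial (Fin ν) K)) : Prop :=
  ∀ m : Fin ν →₀ ℕ, monomial m (1 : K) ∈ I → ∀ i j : Fin ν, i ≤ j → m j ≠ 0 →
    monomial (m + Finsupp.single i 1 - Finsupp.single j 1) (1 : K) ∈ I

/-!
The unipotent upper triangular matrices form the monoid generated by the elementary
transvections `X_Q ↦ X_Q + t X_R` with `R < Q`, and the inverse of such a transvection is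
again one, so it suffices that each of them maps `F = F(A,C,ρ)` into itself. The substitution
sends `X^x` to `∑_k binom(x_Q, k) t^k X^(x + k(e_R - e_Q))`, and every exponent in this sum is
Borel-above `x`. Hence monomials `X^a`, `a ∈ A`, stay in `(X^A)`, since `A` is itself Borel. For a
binomial `X^c - X^(c+ρ)`: if `ρ_Q = 0` the two expansions pair up term by term into binomials of
the same shape, each either a generator or a difference of two monomials of `A`; if `ρ_Q ≠ 0`
then `R < Q < m(ρ)`, so by goodness all of `C` agrees in coordinate `R`, and the terms with
`k ≥ 1` raise that coordinate, leaving `C` and `C + ρ`, hence landing in `A`.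
-/

-- For `R ≠ Q` and `k ≤ x_Q` this is `x + k (e_R - e_Q)`, the exponent of the `k`-th term of
-- `X^x` after the substitution `X_Q ↦ X_Q + t X_R`.
def borelMove {ν : ℕ} (R Q : Fin ν) (x : Fin ν → ℕ) (k : ℕ) : Fin ν → ℕ :=
  Function.update x Q (x Q - k) + Pi.single R k

section CoordinateChange

variable {K : Type*} [CommRing K] {n : ℕ}

lemma mono_eq_prod (a : Fin n → ℕ) : mono K a = ∏ i, (X i : MvPolynomial (Fin n) K) ^ a i := by
  rw [mono, monomial_eq, C_1, one_mul, Finsupp.prod_fintype _ _ fun _ => pow_zero _]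
  rfl

lemma aeval_mono (φ : Fin n → MvPolynomial (Fin n) K) (a : Fin n → ℕ) :
    aeval φ (mono K a) = ∏ i, φ i ^ a i := by
  simp [mono_eq_prod]

lemma actMat_mul (g h : Matrix (Fin n) (Fin n) K) :
    actMat K (g * h) = (actMat K g).comp (actMat K h) := by
  refine algHom_ext fun j => ?_
  simp only [actMat, AlgHom.comp_apply, aeval_X, map_sum, map_mul, aeval_C, Matrix.mul_apply,
    Finset.mul_sum, Finset.sum_mul, algebraMap_eq]
  rw [Finset.sum_comm]
  simp only [mul_comm, mul_left_comm]

lemma actMat_one : actMat K (1 : Matrix (Fin n) (Fin n) K) = AlgHom.id K _ :=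
  algHom_ext fun j => by simp [actMat, Matrix.one_apply]

lemma actMat_transvection {R Q : Fin n} (t : K) :
    actMat K (Matrix.transvection R Q t) = aeval (Function.update X Q (X Q + C t * X R)) := by
  refine algHom_ext fun j => ?_
  rcases eq_or_ne j Q with rfl | hj
  · simp [actMat, Matrix.transvection, Matrix.one_apply, Matrix.single_apply, add_mul,
      Finset.sum_add_distrib, apply_ite C, ite_mul]
  · simp [actMat, Matrix.transvection, Matrix.one_apply, Matrix.single_apply, add_mul,
      Finset.sum_add_distrib, hj, Ne.symm hj]

lemma mono_add (a b : Fin n → ℕ) : mono K (a + b) = mono K a * mono K b := by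
  simp only [mono_eq_prod, Pi.add_apply, pow_add, Finset.prod_mul_distrib]

lemma mono_single (i : Fin n) (k : ℕ) : mono K (Pi.single i k) = X i ^ k := by
  simp [mono_eq_prod, Pi.single_apply]

lemma mono_update (x : Fin n → ℕ) (Q : Fin n) (m : ℕ) :
    mono K (Function.update x Q m) = X Q ^ m * ∏ i ∈ {Q}ᶜ, X i ^ x i := by
  rw [mono_eq_prod, Fintype.prod_eq_mul_prod_compl Q, Function.update_self]
  congr 1
  exact Finset.prod_congr rfl fun i hi => by rw [Function.update_of_ne (by simpa using hi)]

lemma aeval_update_mono (x : Fin n → ℕ) (Q : Fin n) (p : MvPolynomial (Fin n) K) :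
    aeval (Function.update X Q p) (mono K x) = p ^ x Q * ∏ i ∈ {Q}ᶜ, X i ^ x i := by
  rw [aeval_mono, Fintype.prod_eq_mul_prod_compl Q, Function.update_self]
  congr 1
  exact Finset.prod_congr rfl fun i hi => by rw [Function.update_of_ne (by simpa using hi)]

lemma actMat_transvection_mono {R Q : Fin n} (t : K) (x : Fin n → ℕ) :
    actMat K (Matrix.transvection R Q t) (mono K x) =
      ∑ k ∈ Finset.range (x Q + 1), ((x Q).choose k * t ^ k : K) • mono K (borelMove R Q x k) := by
  rw [actMat_transvection, aeval_update_mono, add_comm, add_pow, Finset.sum_mul]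
  refine Finset.sum_congr rfl fun k _ => ?_
  rw [borelMove, mono_add, mono_update, mono_single, smul_eq_C_mul]
  simp only [map_mul, map_pow, map_natCast]
  ring

end CoordinateChange

section BorelMove

variable {n : ℕ} {R Q : Fin n}

lemma borelMove_apply (hRQ : R ≠ Q) (x : Fin n → ℕ) (k : ℕ) (i : Fin n) :
    borelMove R Q x k i = if i = Q then x Q - k else if i = R then x R + k else x i := by
  by_cases hi : i = Q
  · subst hi; simp [borelMove, Ne.symm hRQ]
  · by_cases hiR : i = R
    · subst hiR; simp [borelMove, hi]
    · simp [borelMove, hi, hiR]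

@[simp]
lemma borelMove_zero (x : Fin n → ℕ) : borelMove R Q x 0 = x := by
  simp [borelMove]

lemma borelMove_apply_left (hRQ : R ≠ Q) (x : Fin n → ℕ) (k : ℕ) :
    borelMove R Q x k R = x R + k := by
  simp [borelMove_apply hRQ, hRQ]

-- The move is the sum of the elementary moves `e_j - e_{j+1}`, `R ≤ j < Q`, each taken `k` times.
lemma borelGE_borelMove (hRQ : R < Q) (x : Fin n → ℕ) {k : ℕ} (hk : k ≤ x Q) :
    BorelGE (borelMove R Q x k) x := by
  have hRQ' : (R : ℕ) < Q := hRQ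
  refine ⟨fun j => if (R : ℕ) < j ∧ j ≤ Q then k else 0, by simp, fun j hj => ?_, fun i => ?_⟩
  · have := Q.isLt
    simp only [ite_eq_right_iff, and_imp]
    omega
  · rw [borelMove_apply hRQ.ne]
    rcases eq_or_ne i Q with rfl | hiQ
    · simp only [if_true]
      split_ifs <;> push_cast [hk] <;> omega
    rcases eq_or_ne i R with rfl | hiR
    · simp only [if_neg hiQ, if_true]
      split_ifs <;> push_cast <;> omega
    · have hiQ' : (i : ℕ) ≠ Q := Fin.val_ne_of_ne hiQ
      have hiR' : (i : ℕ) ≠ R := Fin.val_ne_of_ne hiR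
      simp only [if_neg hiQ, if_neg hiR]
      split_ifs <;> omega

end BorelMove

section Stabilizer

variable (K : Type*) [CommRing K] {n : ℕ}

def idealStabilizer (I : Ideal (MvPolynomial (Fin n) K)) :
    Submonoid (Matrix (Fin n) (Fin n) K) where
  carrier := {g | I.map (actMat K g) = I}
  mul_mem' {g h} (hg : I.map (actMat K g) = I) (hh : I.map (actMat K h) = I) := by
    rw [Set.mem_ofPred_eq, actMat_mul, ← Ideal.map_mapₐ, hh, hg]
  one_mem' := by
    rw [Set.mem_ofPred_eq, actMat_one]
    exact Ideal.map_id I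

variable {K}

lemma transvection_mem_idealStabilizer {I : Ideal (MvPolynomial (Fin n) K)} {R Q : Fin n}
    (hRQ : R ≠ Q) (h : ∀ t : K, I.map (actMat K (Matrix.transvection R Q t)) ≤ I) (t : K) :
    Matrix.transvection R Q t ∈ idealStabilizer K I := by
  refine le_antisymm (h t) ?_
  calc I = I.map (actMat K (Matrix.transvection R Q t * Matrix.transvection R Q (-t))) := by
        rw [Matrix.transvection_mul_transvection_same _ _ hRQ, add_neg_cancel,
          Matrix.transvection_zero]
        exact ((idealStabilizer K I).one_mem).symm
    _ = (I.map (actMat K (Matrix.transvection R Q (-t)))).map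
          (actMat K (Matrix.transvection R Q t)) := by rw [actMat_mul, Ideal.map_mapₐ]
    _ ≤ I.map (actMat K (Matrix.transvection R Q t)) := Ideal.map_mono (h (-t))

end Stabilizer

section Unipotent

variable {K : Type*} [CommRing K] {n : ℕ}

lemma IsUnipotent.eq_one_of_offDiag_eq_zero {g : Matrix (Fin n) (Fin n) K} (hg : IsUnipotent g)
    (h : ∀ p q, p ≠ q → g p q = 0) : g = 1 := by
  ext p q
  rcases eq_or_ne p q with rfl | hpq
  · rw [hg.2, Matrix.one_apply_eq]
  · rw [h p q hpq, Matrix.one_apply_ne hpq]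

lemma transvection_mul_sub_single {g : Matrix (Fin n) (Fin n) K} {R Q : Fin n} (hRQ : R ≠ Q)
    (hrow : ∀ q, g Q q = (1 : Matrix (Fin n) (Fin n) K) Q q) :
    Matrix.transvection R Q (g R Q) * (g - Matrix.single R Q (g R Q)) = g := by
  ext p q
  rcases eq_or_ne p R with rfl | hp
  · rw [Matrix.transvection_mul_apply_same]
    simp only [Matrix.sub_apply, Matrix.single_apply, hrow, Matrix.one_apply]
    split_ifs <;> simp_all
  · simp [Matrix.transvection_mul_apply_of_ne _ _ _ _ hp, Ne.symm hp]

lemma IsUnipotent.sub_single {g : Matrix (Fin n) (Fin n) K} (hg : IsUnipotent g) {R Q : Fin n}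
    (hRQ : R < Q) : IsUnipotent (g - Matrix.single R Q (g R Q)) := by
  refine ⟨fun p q hqp => ?_, fun p => ?_⟩
  · rw [Matrix.sub_apply, hg.1 p q hqp, Matrix.single_apply_of_ne, sub_zero]
    rintro ⟨rfl, rfl⟩
    exact lt_asymm hRQ hqp
  · rw [Matrix.sub_apply, hg.2 p, Matrix.single_apply_of_ne, sub_zero]
    rintro ⟨rfl, rfl⟩
    exact lt_irrefl _ hRQ

open Classical in
noncomputable def offDiagSupport (g : Matrix (Fin n) (Fin n) K) : Finset (Fin n × Fin n) :=
  {p | p.1 ≠ p.2 ∧ g p.1 p.2 ≠ 0}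

lemma mem_offDiagSupport {g : Matrix (Fin n) (Fin n) K} {p q : Fin n} :
    (p, q) ∈ offDiagSupport g ↔ p ≠ q ∧ g p q ≠ 0 := by
  simp [offDiagSupport]

lemma offDiagSupport_sub_single_ssubset {g : Matrix (Fin n) (Fin n) K} {R Q : Fin n}
    (hRQ : (R, Q) ∈ offDiagSupport g) :
    offDiagSupport (g - Matrix.single R Q (g R Q)) ⊂ offDiagSupport g := by
  refine ⟨fun ⟨p, q⟩ hpq => ?_, fun h => ?_⟩
  · rw [mem_offDiagSupport, Matrix.sub_apply, Matrix.single_apply] at hpq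
    rw [mem_offDiagSupport]
    refine ⟨hpq.1, fun h0 => hpq.2 ?_⟩
    split_ifs with h
    · obtain ⟨rfl, rfl⟩ := h
      exact sub_self _
    · rw [h0, sub_zero]
  · have := (mem_offDiagSupport.mp (h hRQ)).2
    simp at this

theorem IsUnipotent.mem_closure_transvection {g : Matrix (Fin n) (Fin n) K}
    (hg : IsUnipotent g) :
    g ∈ Submonoid.closure {M | ∃ R Q : Fin n, R < Q ∧ ∃ t, Matrix.transvection R Q t = M} := by
  induction hN : (offDiagSupport g).card using Nat.strong_induction_on generalizing g with
  | _ N ih =>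
  rcases (offDiagSupport g).eq_empty_or_nonempty with hS | hS
  · rw [hg.eq_one_of_offDiag_eq_zero fun p q hpq => not_not.mp fun h =>
      Finset.notMem_empty _ (hS ▸ mem_offDiagSupport.mpr ⟨hpq, h⟩)]
    exact Submonoid.one_mem _
  -- The lowest row carrying an off-diagonal entry: all rows below it are unit rows.
  obtain ⟨⟨R, Q⟩, hRQS, hmax⟩ := (offDiagSupport g).exists_max_image Prod.fst hS
  have hRQ : R < Q :=
    lt_of_le_of_ne (not_lt.mp fun h => (mem_offDiagSupport.mp hRQS).2 (hg.1 R Q h))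
      (mem_offDiagSupport.mp hRQS).1
  have hrow (q : Fin n) : g Q q = (1 : Matrix (Fin n) (Fin n) K) Q q := by
    rcases eq_or_ne Q q with rfl | hQq
    · rw [hg.2, Matrix.one_apply_eq]
    · rw [Matrix.one_apply_ne hQq]
      by_contra h
      exact not_le.mpr hRQ (hmax (Q, q) (mem_offDiagSupport.mpr ⟨hQq, h⟩))
  rw [← transvection_mul_sub_single hRQ.ne hrow]
  refine Submonoid.mul_mem _ (Submonoid.subset_closure ⟨R, Q, hRQ, _, rfl⟩)
    (ih _ ?_ (hg.sub_single hRQ) rfl)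
  exact hN ▸ Finset.card_lt_card (offDiagSupport_sub_single_ssubset hRQS)

end Unipotent

section Fideal

variable {K : Type*} [CommRing K] {n : ℕ} {A C : Set (Fin n → ℕ)} {ρ : Fin n → ℤ}

lemma mono_mem_Fideal {a : Fin n → ℕ} (ha : a ∈ A) : mono K a ∈ Fideal K A C ρ :=
  Ideal.subset_span (Or.inl ⟨a, ha, rfl⟩)

lemma sum_smul_mono_mem_Fideal {ι : Type*} (s : Finset ι) (r : ι → K) {y : ι → Fin n → ℕ}
    (hy : ∀ k ∈ s, y k ∈ A) : ∑ k ∈ s, r k • mono K (y k) ∈ Fideal K A C ρ :=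
  Ideal.sum_mem _ fun k hk => Submodule.smul_of_tower_mem _ _ (mono_mem_Fideal (hy k hk))

lemma mono_sub_mono_mem_Fideal {y z : Fin n → ℕ} (hy : y ∈ A ∪ C) (hz : z ∈ A ∪ shiftSet C ρ)
    (hyz : ∀ i, (z i : ℤ) = y i + ρ i) : mono K y - mono K z ∈ Fideal K A C ρ := by
  by_cases hyC : y ∈ C
  · have : z = shiftVec ρ y := funext fun i => by simp [shiftVec, ← hyz]
    exact Ideal.subset_span (Or.inr ⟨y, hyC, this ▸ rfl⟩)
  have hyA : y ∈ A := hy.resolve_right hyC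
  rcases hz with hzA | ⟨e, he, hez⟩
  · exact sub_mem (mono_mem_Fideal hyA) (mono_mem_Fideal hzA)
  · have hey : e = y := funext fun i => by have := hez i; have := hyz i; omega
    exact absurd (hey ▸ he) hyC

end Fideal

lemma IsBorelSet.of_union_of_union {n : ℕ} {A C D : Set (Fin n → ℕ)} (hC : IsBorelSet (A ∪ C))
    (hD : IsBorelSet (A ∪ D)) (hCD : C ∩ D = ∅) : IsBorelSet A := by
  intro y a hya ha
  rcases hC y a hya (Or.inl ha) with hyA | hyC
  · exact hyA
  rcases hD y a hya (Or.inl ha) with hyA | hyD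
  · exact hyA
  · exact (hCD.subset ⟨hyC, hyD⟩).elim

lemma lt_mIdx_of_ne_zero {n : ℕ} {ρ : Fin n → ℤ} {Q : Fin n} (h : ρ Q ≠ 0) :
    (Q : ℕ) < mIdx ρ :=
  (Finset.le_sup (f := fun i : Fin n => (i : ℕ) + 1) (by simpa using h)).trans (le_max_right _ _)

section Transvection

variable {K : Type*} [CommRing K] {n : ℕ} {A C : Set (Fin n → ℕ)} {ρ : Fin n → ℤ} {R Q : Fin n}

lemma actMat_transvection_mono_eq_add (t : K) (x : Fin n → ℕ) :
    actMat K (Matrix.transvection R Q t) (mono K x) = mono K x +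
      ∑ k ∈ Finset.range (x Q),
        ((x Q).choose (k + 1) * t ^ (k + 1) : K) • mono K (borelMove R Q x (k + 1)) := by
  rw [actMat_transvection_mono, Finset.sum_range_succ', add_comm]
  simp

lemma borelMove_succ_mem {B D : Set (Fin n → ℕ)} (hBD : IsBorelSet (B ∪ D)) (hRQ : R < Q)
    {y : Fin n → ℕ} (hy : y ∈ B ∪ D) (hD : ∀ z ∈ D, z R = y R) {k : ℕ} (hk : k + 1 ≤ y Q) :
    borelMove R Q y (k + 1) ∈ B := by
  refine (hBD _ _ (borelGE_borelMove hRQ y hk) hy).resolve_right fun hmem => ?_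
  have := hD _ hmem
  rw [borelMove_apply_left hRQ.ne] at this
  omega

lemma actMat_transvection_mono_mem_Fideal (hA : IsBorelSet A) (hRQ : R < Q) (t : K)
    {a : Fin n → ℕ} (ha : a ∈ A) :
    actMat K (Matrix.transvection R Q t) (mono K a) ∈ Fideal K A C ρ := by
  rw [actMat_transvection_mono]
  exact sum_smul_mono_mem_Fideal _ _ fun k hk =>
    hA _ _ (borelGE_borelMove hRQ a (Nat.lt_succ_iff.mp (Finset.mem_range.mp hk))) ha

lemma actMat_transvection_binomial_mem_Fideal_of_eq_zero (hAC : IsBorelSet (A ∪ C))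
    (hAρ : IsBorelSet (A ∪ shiftSet C ρ)) (hRQ : R < Q) (hρ : ρ Q = 0) (t : K)
    {y z : Fin n → ℕ} (hy : y ∈ A ∪ C) (hz : z ∈ A ∪ shiftSet C ρ)
    (hyz : ∀ i, (z i : ℤ) = y i + ρ i) :
    actMat K (Matrix.transvection R Q t) (mono K y - mono K z) ∈ Fideal K A C ρ := by
  have hQ : z Q = y Q := by have := hyz Q; omega
  rw [map_sub, actMat_transvection_mono, actMat_transvection_mono, hQ, ← Finset.sum_sub_distrib]
  refine Ideal.sum_mem _ fun k hk => ?_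
  have hk : k ≤ y Q := Nat.lt_succ_iff.mp (Finset.mem_range.mp hk)
  rw [← smul_sub]
  refine Submodule.smul_of_tower_mem _ _ (mono_sub_mono_mem_Fideal
    (hAC _ _ (borelGE_borelMove hRQ y hk) hy) (hAρ _ _ (borelGE_borelMove hRQ z (hQ ▸ hk)) hz)
    fun i => ?_)
  simp only [borelMove_apply hRQ.ne]
  split_ifs with hiQ hiR
  · subst hiQ; omega
  · subst hiR; have := hyz i; push_cast; omega
  · exact hyz i

lemma actMat_transvection_binomial_mem_Fideal_of_const (hAC : IsBorelSet (A ∪ C))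
    (hAρ : IsBorelSet (A ∪ shiftSet C ρ)) (hRQ : R < Q) (t : K) {y z : Fin n → ℕ} (hy : y ∈ C)
    (hC : ∀ b ∈ C, b R = y R) (hyz : ∀ i, (z i : ℤ) = y i + ρ i) :
    actMat K (Matrix.transvection R Q t) (mono K y - mono K z) ∈ Fideal K A C ρ := by
  have hz : z ∈ shiftSet C ρ := ⟨y, hy, hyz⟩
  have hzC : ∀ x ∈ shiftSet C ρ, x R = z R := by
    rintro x ⟨e, he, hxe⟩
    have := hxe R; have := hyz R; have := hC e he
    omega
  rw [map_sub, actMat_transvection_mono_eq_add, actMat_transvection_mono_eq_add, add_sub_add_comm]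
  refine add_mem (mono_sub_mono_mem_Fideal (Or.inr hy) (Or.inr hz) hyz) (sub_mem ?_ ?_)
  · exact sum_smul_mono_mem_Fideal _ _ fun k hk =>
      borelMove_succ_mem hAC hRQ (Or.inr hy) hC (Finset.mem_range.mp hk)
  · exact sum_smul_mono_mem_Fideal _ _ fun k hk =>
      borelMove_succ_mem hAρ hRQ (Or.inr hz) hzC (Finset.mem_range.mp hk)

lemma map_actMat_transvection_Fideal_le {d : ℕ} (hB : IsBinomialSystem d A C ρ) (hRQ : R < Q)
    (hQ : ρ Q = 0 ∨ ∀ b ∈ C, ∀ c ∈ C, b R = c R) (t : K) :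
    (Fideal K A C ρ).map (actMat K (Matrix.transvection R Q t)) ≤ Fideal K A C ρ := by
  obtain ⟨-, -, hnonneg, -, -, -, hdisj, hAC, hAρ⟩ := hB
  rw [Fideal, Ideal.map_span, Ideal.span_le]
  rintro _ ⟨_, ⟨a, ha, rfl⟩ | ⟨c, hc, rfl⟩, rfl⟩
  · exact actMat_transvection_mono_mem_Fideal (hAC.of_union_of_union hAρ hdisj) hRQ t ha
  have hyz (i : Fin n) : (shiftVec ρ c i : ℤ) = c i + ρ i := Int.toNat_of_nonneg (hnonneg c hc i)
  rcases hQ with hρ | hC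
  · exact actMat_transvection_binomial_mem_Fideal_of_eq_zero hAC hAρ hRQ hρ t (Or.inr hc)
      (Or.inr ⟨c, hc, hyz⟩) hyz
  · exact actMat_transvection_binomial_mem_Fideal_of_const hAC hAρ hRQ t hc
      (fun b hb => hC b hb c hc) hyz

end Transvection

theorem stmt15_general {K : Type*} [Field K] {n d : ℕ}
    (A C : Set (Fin n → ℕ)) (ρ : Fin n → ℤ)
    (hB : IsBinomialSystem d A C ρ)
    (hgood : ∀ b ∈ C, ∀ c ∈ C, ∀ i : Fin n, (i : ℕ) + 1 < mIdx ρ → b i = c i)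
    (g : Matrix (Fin n) (Fin n) K) (hg : IsUnipotent g) :
    Ideal.map (actMat K g) (Fideal K A C ρ) = Fideal K A C ρ := by
  suffices Submonoid.closure {M | ∃ R Q : Fin n, R < Q ∧ ∃ t, Matrix.transvection R Q t = M} ≤
      idealStabilizer K (Fideal K A C ρ) from this hg.mem_closure_transvection
  rw [Submonoid.closure_le]
  rintro _ ⟨R, Q, hRQ, t, rfl⟩
  refine transvection_mem_idealStabilizer hRQ.ne (map_actMat_transvection_Fideal_le hB hRQ ?_) t
  refine (em (ρ Q = 0)).imp id fun hρ b hb c hc => hgood b hb c hc R ?_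
  have : (R : ℕ) < Q := hRQ
  have := lt_mIdx_of_ne_zero hρ
  omega

/-- for a good binomial system, the ideal `F(A,C,ρ)` is fixed by every
unipotent upper triangular coordinate change. -/
theorem stmt15 {K : Type*} [Field K] [CharZero K] {n d : ℕ}
    (A C : Set (Fin n → ℕ)) (ρ : Fin n → ℤ)
    (hB : IsBinomialSystem d A C ρ)
    (hgood : ∀ b ∈ C, ∀ c ∈ C, ∀ i : Fin n, (i : ℕ) + 1 < mIdx ρ → b i = c i)
    (g : Matrix (Fin n) (Fin n) K) (hg : IsUnipotent g) :
    Ideal.map (actMat K g) (Fideal K A C ρ) = Fideal K A C ρ :=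
  stmt15_general A C ρ hB hgood g hg

end Fumasoli
end

section
/- Let a, b ∈ ℕ^n_d. Then a ≥_Bor b if and only if X^a ≥_τ X^b for every admissible term order τ on the monomials of K[X_1,…,X_n]. -/
open MvPolynomial

namespace Fumasoli

/-!
An admissible term order is compatible with addition and has `e_{j+1} < e_j`, so moving
exponent from a variable to an earlier one raises a monomial. If `a - b = Σ α_j (e_{j-1} - e_j)`,
then `a + Σ α_j e_j = b + Σ α_j e_{j-1} ≥ b + Σ α_j e_j`, and cancelling gives `a ≥ b`.
Conversely, `a ≥_Bor b` for vectors of equal degree says exactly that every partial sum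
`a_1 + ⋯ + a_m` dominates `b_1 + ⋯ + b_m`, and the inequality for `m` is forced by the
admissible order comparing degree, then the `m`-th partial sum, then lexicographically.
-/

open Finset

def partialSum {ν : ℕ} (x : Fin ν → ℕ) (j : ℕ) : ℕ :=
  ∑ i ∈ univ.filter fun i : Fin ν => (i : ℕ) < j, x i

lemma partialSum_zero {ν : ℕ} (x : Fin ν → ℕ) : partialSum x 0 = 0 := by
  simp [partialSum]

lemma partialSum_succ {ν : ℕ} (x : Fin ν → ℕ) (i : Fin ν) :
    partialSum x (i + 1) = partialSum x i + x i := by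
  have h : univ.filter (fun k : Fin ν => (k : ℕ) < i + 1)
      = insert i (univ.filter fun k : Fin ν => (k : ℕ) < i) := by
    ext k
    simp only [mem_insert, mem_filter, mem_univ, true_and, Fin.ext_iff]
    omega
  rw [partialSum, h, sum_insert (by simp), add_comm, partialSum]

lemma partialSum_of_le {ν : ℕ} (x : Fin ν → ℕ) {j : ℕ} (h : ν ≤ j) :
    partialSum x j = ∑ i, x i := by
  rw [partialSum, filter_true_of_mem fun k _ => k.isLt.trans_le h]

lemma partialSum_add {ν : ℕ} (x y : Fin ν → ℕ) (j : ℕ) :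
    partialSum (x + y) j = partialSum x j + partialSum y j :=
  sum_add_distrib

lemma partialSum_stdExp {ν : ℕ} (k : Fin ν) (j : ℕ) :
    partialSum (stdExp ν k) j = if (k : ℕ) < j then 1 else 0 := by
  simp [partialSum, stdExp, sum_ite_eq']

lemma sum_stdExp {ν : ℕ} (k : Fin ν) : ∑ i, stdExp ν k i = 1 := by
  simp [stdExp]

theorem borelGE_of_partialSum_le {ν : ℕ} {a b : Fin ν → ℕ}
    (hle : ∀ j, partialSum b j ≤ partialSum a j) (hsum : ∑ i, a i = ∑ i, b i) :
    BorelGE a b := by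
  refine ⟨fun j => partialSum a j - partialSum b j, by simp [partialSum_zero], fun j hj => ?_,
    fun i => ?_⟩
  · simp [partialSum_of_le _ hj, hsum]
  · have := hle (i + 1)
    have := hle i
    have := partialSum_succ a i
    have := partialSum_succ b i
    dsimp only
    omega

namespace TermOrder

variable {ν : ℕ} (τ : TermOrder ν)

def le (x y : Fin ν → ℕ) : Prop := x = y ∨ τ.lt x y

variable {τ} {x y z u v : Fin ν → ℕ}

lemma le_refl (x : Fin ν → ℕ) : τ.le x x := Or.inl rfl

lemma le_trans (hxy : τ.le x y) (hyz : τ.le y z) : τ.le x z := by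
  rcases hxy with rfl | hxy
  · exact hyz
  rcases hyz with rfl | hyz
  · exact Or.inr hxy
  · exact Or.inr (τ.trans _ _ _ hxy hyz)

lemma add_le_add_right (h : τ.le x y) (c : Fin ν → ℕ) : τ.le (x + c) (y + c) :=
  h.imp (congrArg (· + c)) (τ.add_right _ _ c)

lemma add_le_add (hxy : τ.le x y) (huv : τ.le u v) : τ.le (x + u) (y + v) := by
  refine le_trans (add_le_add_right hxy u) ?_
  rw [add_comm y, add_comm y]
  exact add_le_add_right huv y

lemma nsmul_le_nsmul (h : τ.le x y) (k : ℕ) : τ.le (k • x) (k • y) := by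
  induction k with
  | zero => simpa using le_refl 0
  | succ k ih => rw [succ_nsmul, succ_nsmul]; exact add_le_add ih h

lemma sum_le_sum {ι : Type*} (s : Finset ι) {f g : ι → Fin ν → ℕ}
    (h : ∀ i ∈ s, τ.le (f i) (g i)) : τ.le (∑ i ∈ s, f i) (∑ i ∈ s, g i) := by
  classical
  induction s using Finset.induction_on with
  | empty => exact le_refl 0
  | insert i s hi ih =>
    rw [sum_insert hi, sum_insert hi]
    exact add_le_add (h i (mem_insert_self i s)) (ih fun j hj => h j (mem_insert_of_mem hj))

lemma le_of_add_le_add_right (h : τ.le (x + z) (y + z)) : τ.le x y := by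
  rcases τ.total x y with hxy | rfl | hyx
  · exact Or.inr hxy
  · exact le_refl x
  · have := τ.add_right _ _ z hyx
    rcases h with h | h
    · exact absurd (h ▸ this) (τ.irrefl _)
    · exact absurd (τ.trans _ _ _ h this) (τ.irrefl _)

def ofInjective {M : Type*} [AddCommMonoid M] [LinearOrder M] [IsOrderedCancelAddMonoid M]
    (φ : (Fin ν → ℕ) →+ M) (hφ : Function.Injective φ) : TermOrder ν where
  lt x y := φ x < φ y
  irrefl x := lt_irrefl (φ x)
  trans _ _ _ := lt_trans
  total x y := (lt_trichotomy (φ x) (φ y)).imp_right (Or.imp_left (hφ ·))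
  add_right x y c h := by simpa only [map_add] using add_lt_add_of_lt_of_le h le_rfl

end TermOrder

/-- `e_k`, indexed by a natural number so that it is `0` for `ν ≤ k`. -/
def unitVec (ν k : ℕ) : Fin ν → ℕ := fun i => if (i : ℕ) = k then 1 else 0

lemma unitVec_of_lt {ν k : ℕ} (h : k < ν) : unitVec ν k = stdExp ν ⟨k, h⟩ := by
  ext i
  simp [unitVec, stdExp, Fin.ext_iff]

lemma unitVec_of_le {ν k : ℕ} (h : ν ≤ k) : unitVec ν k = 0 := by
  ext i
  simp [unitVec, (i.isLt.trans_le h).ne]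

lemma sum_smul_unitVec_apply {ν : ℕ} (s : Finset ℕ) (f : ℕ → ℕ) (i : Fin ν) :
    (∑ j ∈ s, f j • unitVec ν j) i = if (i : ℕ) ∈ s then f i else 0 := by
  simp [Finset.sum_apply, unitVec, eq_comm]

lemma TermOrder.IsAdmissible.unitVec_succ_le {ν : ℕ} {τ : TermOrder ν} (hτ : τ.IsAdmissible)
    (j : ℕ) : τ.le (unitVec ν (j + 1)) (unitVec ν j) := by
  by_cases hj : j + 1 < ν
  · rw [unitVec_of_lt hj, unitVec_of_lt (by omega)]
    exact Or.inr (hτ.1 _ _ (Fin.mk_lt_mk.2 j.lt_succ_self))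
  rw [unitVec_of_le (by omega)]
  by_cases hj' : j < ν
  · rw [unitVec_of_lt hj']
    exact Or.inr (hτ.2 _ _ (by simp [sum_stdExp]))
  · rw [unitVec_of_le (by omega)]
    exact TermOrder.le_refl 0

theorem TermOrder.IsAdmissible.le_of_borelGE {ν : ℕ} {τ : TermOrder ν} (hτ : τ.IsAdmissible)
    {a b : Fin ν → ℕ} (h : BorelGE a b) : τ.le b a := by
  obtain ⟨α, hα0, -, hab⟩ := h
  -- `a + A = b + B`, and `B` arises from `A` by moving every unit of exponent one place left
  set A := ∑ j ∈ range ν, α (j + 1) • unitVec ν (j + 1)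
  set B := ∑ j ∈ range ν, α (j + 1) • unitVec ν j with hB
  have hA : A = ∑ j ∈ range (ν + 1), α j • unitVec ν j := by
    rw [sum_range_succ', hα0, zero_smul, add_zero]
  have hAB : b + B = a + A := by
    ext i
    have := hab i
    simp only [Pi.add_apply, hA, hB, sum_smul_unitVec_apply, mem_range, i.isLt, if_true,
      Nat.lt_succ_of_lt]
    omega
  refine TermOrder.le_of_add_le_add_right (z := A) ?_
  rw [← hAB]
  exact TermOrder.add_le_add (TermOrder.le_refl b) (TermOrder.sum_le_sum _ fun j _ =>
    TermOrder.nsmul_le_nsmul (hτ.unitVec_succ_le j) _)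

noncomputable def partialSumOrder (ν m : ℕ) : TermOrder ν :=
  TermOrder.ofInjective
    { toFun := fun x => toLex (∑ i, x i, toLex (partialSum x m, toLex x))
      map_zero' := by simp [partialSum]
      map_add' := fun x y => by simp only [Pi.add_apply, sum_add_distrib, partialSum_add]; rfl }
    fun x y h => by simp_all

lemma partialSumOrder_lt_iff {ν m : ℕ} {x y : Fin ν → ℕ} :
    (partialSumOrder ν m).lt x y ↔
      toLex (∑ i, x i, toLex (partialSum x m, toLex x)) <
        toLex (∑ i, y i, toLex (partialSum y m, toLex y)) :=
  Iff.rfl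

lemma toLex_stdExp_lt {ν : ℕ} {i j : Fin ν} (hij : i < j) :
    toLex (stdExp ν j) < toLex (stdExp ν i) :=
  ⟨i, fun l hl => by simp [stdExp, hl.ne, (hl.trans hij).ne], by simp [stdExp, hij.ne]⟩

lemma partialSumOrder_isAdmissible (ν m : ℕ) : (partialSumOrder ν m).IsAdmissible := by
  refine ⟨fun i j hij => ?_, fun x y h =>
    partialSumOrder_lt_iff.2 (Prod.Lex.toLex_lt_toLex.2 (.inl h))⟩
  refine partialSumOrder_lt_iff.2
    (Prod.Lex.toLex_lt_toLex'.2 ⟨by simp [sum_stdExp], fun _ => ?_⟩)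
  refine Prod.Lex.toLex_lt_toLex'.2 ⟨?_, fun _ => toLex_stdExp_lt hij⟩
  have := Fin.lt_def.1 hij
  simp only [partialSum_stdExp]
  split_ifs <;> omega

lemma partialSum_le_of_partialSumOrder_lt {ν m : ℕ} {x y : Fin ν → ℕ}
    (h : (partialSumOrder ν m).lt x y) (hdeg : ∑ i, x i = ∑ i, y i) :
    partialSum x m ≤ partialSum y m := by
  have hinner := (Prod.Lex.toLex_lt_toLex'.1 (partialSumOrder_lt_iff.1 h)).2 hdeg
  exact (Prod.Lex.toLex_lt_toLex'.1 hinner).1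

/-- `a ≥_Bor b` iff `X^a ≥_τ X^b` for every admissible term order `τ`. -/
theorem stmt17 {n d : ℕ} (a b : Fin n → ℕ)
    (ha : ∑ i, a i = d) (hb : ∑ i, b i = d) :
    BorelGE a b ↔ ∀ τ : TermOrder n, τ.IsAdmissible → (a = b ∨ τ.lt b a) := by
  refine ⟨fun h τ hτ => (hτ.le_of_borelGE h).imp Eq.symm id, fun H => ?_⟩
  refine borelGE_of_partialSum_le (fun m => ?_) (ha.trans hb.symm)
  rcases H _ (partialSumOrder_isAdmissible n m) with rfl | hlt
  · exact le_rfl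
  · exact partialSum_le_of_partialSumOrder_lt hlt (hb.trans ha.symm)

end Fumasoli
end

section
/- Let (A,C,ρ) be a binomial system with ρ_{m(ρ)} > 0 and set m = m(ρ). Then every variable X_i with 1 ≤ i < m lies in the radical of the colon ideal ((F(A,C,ρ) ∩ S_(m))^sat :_{S_(m)} ((in_rlex F(A,C,ρ)) ∩ S_(m−1))^sat S_(m)), where S_(i) = K[X_1,…,X_i]. Consequently the quotient module ((in_rlex F(A,C,ρ)) ∩ S_(m−1))^sat S_(m) / (F(A,C,ρ) ∩ S_(m))^sat has dimension at most 1 over S_(m). -/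
open MvPolynomial

namespace Fumasoli

/-!
Put `q = ρ_m > 0`. Every term of an element of `in F` is divisible by some `X^e` with
`e ∈ A ∪ C ∪ (C + ρ)`, and for a term free of `X_m` the exponent `e` cannot lie in `C + ρ`.
For `e ∈ C` and `i < m` we have `X_i^q X^e ≡ X_i^q X^(e+ρ) = X_m^q X^a (mod F)`, where `a`
moves the `q` units of `e + ρ` at `X_m` to `X_i`; by the Borel property of `A ∪ (C + ρ)`,
`a ∈ A`. So a power of `X_i` multiplies each element of `(in F ∩ S_(m-1))^sat` into
`F ∩ S_(m)`, and by noetherianity the power can be chosen uniformly. Modulo the annihilator of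
the quotient module the variables `X_i`, `i < m`, are then nilpotent, so up to nilpotents the
quotient ring is generated by `X_m` alone and has dimension at most one.
-/

section RingTheory

variable {R : Type*} [CommRing R]

theorem mem_radical_colon_of_le_iSup_colon_pow [IsNoetherianRing R] {I J : Ideal R} {x : R}
    (hJ : J ≤ ⨆ k : ℕ, I.colon (Ideal.span {x ^ k} : Set R)) :
    x ∈ (I.colon (J : Set R)).radical := by
  let f : ℕ →o Ideal R := ⟨fun k => I.colon (Ideal.span {x ^ k} : Set R), fun a b hab r hr => by
    rw [Ideal.mem_colon_span_singleton] at hr ⊢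
    rw [← pow_mul_pow_sub x hab, ← mul_assoc]
    exact I.mul_mem_right _ hr⟩
  obtain ⟨k, hk⟩ := monotone_stabilizes_iff_noetherian.mpr inferInstance f
  have hJk : J ≤ f k := hJ.trans <| iSup_le fun l =>
    (f.monotone (le_max_left l k)).trans (hk _ (le_max_right l k)).ge
  refine ⟨k, Submodule.mem_colon.mpr fun p hp => ?_⟩
  rw [smul_eq_mul, mul_comm]
  exact Ideal.mem_colon_span_singleton.mp (hJk hp)

theorem ringKrullDim_quotient_le_of_le_radical {I J : Ideal R} (h : J ≤ I.radical) :
    ringKrullDim (R ⧸ I) ≤ ringKrullDim (R ⧸ J) := by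
  rw [ringKrullDim_quotient, ringKrullDim_quotient]
  refine Order.krullDim_le_of_strictMono (fun p => ⟨p.1, ?_⟩) fun _ _ hpq => hpq
  have hp : p.1 ∈ PrimeSpectrum.zeroLocus (I.radical : Set R) := by
    rw [PrimeSpectrum.zeroLocus_radical]; exact p.2
  exact PrimeSpectrum.zeroLocus_anti_mono_ideal h hp

theorem ringKrullDim_le_one_of_adjoin_singleton_eq_top {K A : Type*} [Field K] [CommRing A]
    [Algebra K A] {x : A} (hx : Algebra.adjoin K {x} = ⊤) : ringKrullDim A ≤ 1 := by
  have hsurj : Function.Surjective (Polynomial.aeval (R := K) x) := fun y => by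
    have hy : y ∈ Algebra.adjoin K {x} := hx ▸ Algebra.mem_top
    rwa [Algebra.adjoin_singleton_eq_range_aeval] at hy
  calc ringKrullDim A ≤ ringKrullDim (Polynomial K) := ringKrullDim_le_of_surjective _ hsurj
    _ = 1 := by simp

theorem colon_le_annihilator_idealQuot (J J' : Ideal R) :
    J'.colon (J : Set R) ≤ Module.annihilator R (idealQuot J J') := by
  intro a ha
  rw [Module.mem_annihilator]
  rintro ⟨y⟩
  refine (Submodule.Quotient.mk_eq_zero _).mpr ?_
  rw [Submodule.mem_comap, Submodule.coe_subtype, Submodule.coe_smul]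
  exact Submodule.mem_colon.mp ha y y.2

end RingTheory

section Quotient

variable {σ K : Type*}

theorem adjoin_mk_X_eq_top_of_X_mem [CommRing K] {I : Ideal (MvPolynomial σ K)} (j₀ : σ)
    (h : ∀ j ≠ j₀, X j ∈ I) : Algebra.adjoin K {Ideal.Quotient.mk I (X j₀)} = ⊤ := by
  rw [eq_top_iff, ← (AlgHom.range_eq_top _).mpr (Ideal.Quotient.mkₐ_surjective K I),
    ← Algebra.map_top, ← adjoin_range_X, AlgHom.map_adjoin, Algebra.adjoin_le_iff]
  rintro _ ⟨_, ⟨j, rfl⟩, rfl⟩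
  by_cases hj : j = j₀
  · exact Algebra.subset_adjoin (by rw [hj]; rfl)
  · rw [Ideal.Quotient.mkₐ_eq_mk, Ideal.Quotient.eq_zero_iff_mem.mpr (h j hj)]
    exact Subalgebra.zero_mem _

theorem ringKrullDim_quotient_le_one_of_X_mem_radical [Field K] {I : Ideal (MvPolynomial σ K)}
    (j₀ : σ) (h : ∀ j ≠ j₀, X j ∈ I.radical) : ringKrullDim (MvPolynomial σ K ⧸ I) ≤ 1 := by
  let N : Ideal (MvPolynomial σ K) := Ideal.span (X '' {j | j ≠ j₀})
  calc ringKrullDim (MvPolynomial σ K ⧸ I) ≤ ringKrullDim (MvPolynomial σ K ⧸ N) :=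
        ringKrullDim_quotient_le_of_le_radical <| Ideal.span_le.mpr <| by
          rintro _ ⟨j, hj, rfl⟩
          exact h j hj
    _ ≤ 1 := ringKrullDim_le_one_of_adjoin_singleton_eq_top <|
        adjoin_mk_X_eq_top_of_X_mem j₀ fun j hj => Ideal.subset_span ⟨j, hj, rfl⟩

end Quotient

section Saturation

variable {K : Type*} [CommRing K] {ν : ℕ}

theorem le_satIdeal (I : Ideal (MvPolynomial (Fin ν) K)) : I ≤ satIdeal I :=
  fun _ hf => Submodule.mem_iSup_of_mem 0 (Ideal.le_colon hf)

theorem mem_satIdeal {I : Ideal (MvPolynomial (Fin ν) K)} {f : MvPolynomial (Fin ν) K} :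
    f ∈ satIdeal I ↔ ∃ k : ℕ,
      f ∈ I.colon ((irrelIdeal K ν ^ k : Ideal (MvPolynomial (Fin ν) K)) : Set _) := by
  refine Submodule.mem_iSup_of_directed _ fun a b => ⟨max a b, ?_, ?_⟩ <;>
    exact Submodule.colon_mono le_rfl
      (SetLike.coe_subset_coe.mpr (Ideal.pow_le_pow_right (by omega)))

end Saturation

section Monomial

variable {K : Type*} [CommSemiring K] {ν : ℕ}

@[simp]
theorem expF_apply (a : Fin ν → ℕ) (i : Fin ν) : expF a i = a i := rfl

theorem expF_coe (μ : Fin ν →₀ ℕ) : expF ⇑μ = μ := Finsupp.equivFunOnFinite_symm_coe μ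

variable (K) in
noncomputable def monomialSpan (E : Set (Fin ν → ℕ)) : Ideal (MvPolynomial (Fin ν) K) :=
  Ideal.span ((fun μ => monomial μ (1 : K)) '' (expF '' E))

theorem mem_monomialSpan {E : Set (Fin ν → ℕ)} {f : MvPolynomial (Fin ν) K} :
    f ∈ monomialSpan K E ↔ ∀ μ ∈ f.support, ∃ e ∈ E, expF e ≤ μ := by
  simp only [monomialSpan, mem_ideal_span_monomial_image, Set.exists_mem_image]

theorem initialIdeal_le_monomialSpan {lt : (Fin ν → ℕ) → (Fin ν → ℕ) → Prop}
    {I : Ideal (MvPolynomial (Fin ν) K)} {E : Set (Fin ν → ℕ)} (h : I ≤ monomialSpan K E) :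
    initialIdeal lt I ≤ monomialSpan K E := by
  refine Ideal.span_le.mpr ?_
  rintro _ ⟨f, hf, -, μ, hμ, rfl⟩
  obtain ⟨e, he, heμ⟩ := mem_monomialSpan.mp (h hf) μ hμ.1
  exact mem_monomialSpan.mpr fun μ' hμ' =>
    ⟨e, he, Finset.mem_singleton.mp (support_monomial_subset hμ') ▸ heμ⟩

end Monomial

section Inclusion

variable {K : Type*} [CommSemiring K] {ν : ℕ}

theorem inclAlg_X {l : ℕ} (h : l ≤ ν) (i : Fin l) :
    inclAlg K h (X i) = X (Fin.castLE h i) :=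
  rename_X _ _

theorem inclAlg_inclAlg {k l : ℕ} (hkl : k ≤ l) (hl : l ≤ ν) (p : MvPolynomial (Fin k) K) :
    inclAlg K hl (inclAlg K hkl p) = inclAlg K (hkl.trans hl) p := by
  rw [inclAlg, inclAlg, inclAlg, rename_rename]
  rfl

theorem support_inclAlg_apply_eq_zero {l : ℕ} (h : l ≤ ν) (p : MvPolynomial (Fin l) K)
    {μ : Fin ν →₀ ℕ} (hμ : μ ∈ (inclAlg K h p).support) {j : Fin ν} (hj : l ≤ j) : μ j = 0 := by
  classical
  rw [inclAlg, support_rename_of_injective (Fin.castLE_injective h)] at hμ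
  obtain ⟨μ', -, rfl⟩ := Finset.mem_image.mp hμ
  refine Finsupp.mapDomain_of_notMem_range _ _ ?_
  rintro ⟨i, rfl⟩
  exact absurd hj (not_le.mpr i.isLt)

end Inclusion

section BinomialSystem

theorem borelGE_of_move {ν : ℕ} {a b : Fin ν → ℕ} {i j : Fin ν} (hij : i < j) {q : ℕ}
    (hai : a i = b i + q) (haj : a j + q = b j) (ha : ∀ k, k ≠ i → k ≠ j → a k = b k) :
    BorelGE a b := by
  have hij' := Fin.lt_def.mp hij
  refine ⟨fun l => if (i : ℕ) < l ∧ l ≤ j then q else 0, by simp, fun l hl => ?_, fun k => ?_⟩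
  · have := j.isLt
    simp only [ite_eq_right_iff, and_imp]
    omega
  · by_cases hki : k = i
    · subst hki
      push_cast [hai]
      split_ifs <;> omega
    by_cases hkj : k = j
    · subst hkj
      rw [← haj]
      push_cast
      split_ifs <;> omega
    have := Fin.val_ne_of_ne hki
    have := Fin.val_ne_of_ne hkj
    rw [ha k hki hkj]
    push_cast
    split_ifs <;> omega

variable {K : Type*} [CommRing K] {n : ℕ} {A C : Set (Fin n → ℕ)} {ρ : Fin n → ℤ}

theorem Fideal_le_monomialSpan (hCnn : ∀ c ∈ C, ∀ i, 0 ≤ (c i : ℤ) + ρ i) :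
    Fideal K A C ρ ≤ monomialSpan K (A ∪ C ∪ shiftSet C ρ) := by
  refine Ideal.span_le.mpr ?_
  rintro _ (⟨a, ha, rfl⟩ | ⟨c, hc, rfl⟩)
  · exact Ideal.subset_span ⟨_, ⟨a, Or.inl (Or.inl ha), rfl⟩, rfl⟩
  · exact sub_mem (Ideal.subset_span ⟨_, ⟨c, Or.inl (Or.inr hc), rfl⟩, rfl⟩)
      (Ideal.subset_span
        ⟨_, ⟨_, Or.inr ⟨c, hc, fun j => Int.toNat_of_nonneg (hCnn c hc j)⟩, rfl⟩, rfl⟩)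

theorem monomial_mem_Fideal_of_le {a : Fin n → ℕ} (ha : a ∈ A) {μ : Fin n →₀ ℕ}
    (hμ : expF a ≤ μ) : monomial μ (1 : K) ∈ Fideal K A C ρ := by
  rw [← tsub_add_cancel_of_le hμ, ← mul_one (1 : K), ← monomial_mul]
  exact Ideal.mul_mem_left _ _ (Ideal.subset_span (Or.inl ⟨a, ha, rfl⟩))

theorem X_pow_mul_mono_mem_Fideal (hCnn : ∀ c ∈ C, ∀ i, 0 ≤ (c i : ℤ) + ρ i)
    (hBor : IsBorelSet (A ∪ shiftSet C ρ)) {i i₀ : Fin n} (hi : i < i₀) (hρ : 0 < ρ i₀)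
    {c : Fin n → ℕ} (hc : c ∈ C) (hc₀ : c i₀ = 0) :
    X i ^ (ρ i₀).toNat * mono K c ∈ Fideal K A C ρ := by
  set q := (ρ i₀).toNat
  set c' := shiftVec ρ c
  have hc' : ∀ j, (c' j : ℤ) = c j + ρ j := fun j => Int.toNat_of_nonneg (hCnn c hc j)
  have hc'₀ : c' i₀ = q := by have := hc' i₀; omega
  have hne : i ≠ i₀ := hi.ne
  have hle : Finsupp.single i₀ q ≤ expF c' + Finsupp.single i q :=
    Finsupp.single_le_iff.mpr (by simp [hc'₀, hne])
  set a : Fin n →₀ ℕ := expF c' + Finsupp.single i q - Finsupp.single i₀ q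
  have haA : ⇑a ∈ A := by
    have hBorGE : BorelGE a c' := borelGE_of_move hi (q := q)
      (by simp [a, hne])
      (by simp [a, hne, hc'₀])
      (fun k hki hki₀ => by simp [a, Ne.symm hki, Ne.symm hki₀])
    refine (hBor _ _ hBorGE (Or.inr ⟨c, hc, hc'⟩)).resolve_right ?_
    rintro ⟨c'', hc'', h⟩
    have ha₀ : a i₀ = 0 := by simp [a, hc'₀, hne]
    have h₀ := h i₀
    have hc''₀ := hCnn c'' hc'' i₀
    omega
  have hshift : X i ^ q * mono K c' = X i₀ ^ q * mono K ⇑a := by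
    simp only [mono, expF_coe, X_pow_eq_monomial, monomial_mul, one_mul]
    have ha : a + Finsupp.single i₀ q = expF c' + Finsupp.single i q := tsub_add_cancel_of_le hle
    rw [add_comm (Finsupp.single i₀ q), ha, add_comm]
  rw [← sub_add_cancel (X i ^ q * mono K c) (X i ^ q * mono K c'), ← mul_sub, hshift]
  exact add_mem (Ideal.mul_mem_left _ _ (Ideal.subset_span (Or.inr ⟨c, hc, rfl⟩)))
    (Ideal.mul_mem_left _ _ (Ideal.subset_span (Or.inl ⟨_, haA, rfl⟩)))

theorem X_pow_mul_monomial_mem_Fideal (hCnn : ∀ c ∈ C, ∀ i, 0 ≤ (c i : ℤ) + ρ i)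
    (hBor : IsBorelSet (A ∪ shiftSet C ρ)) {i i₀ : Fin n} (hi : i < i₀) (hρ : 0 < ρ i₀)
    {μ : Fin n →₀ ℕ} (hμ₀ : μ i₀ = 0) {e : Fin n → ℕ} (he : e ∈ A ∪ C ∪ shiftSet C ρ)
    (heμ : expF e ≤ μ) : X i ^ (ρ i₀).toNat * monomial μ (1 : K) ∈ Fideal K A C ρ := by
  have he₀ : e i₀ = 0 := Nat.eq_zero_of_le_zero (hμ₀ ▸ heμ i₀)
  rcases he with (heA | heC) | ⟨c, hc, hce⟩
  · exact Ideal.mul_mem_left _ _ (monomial_mem_Fideal_of_le heA heμ)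
  · rw [← tsub_add_cancel_of_le heμ, ← mul_one (1 : K), ← monomial_mul, mul_left_comm]
    exact Ideal.mul_mem_left _ _ (X_pow_mul_mono_mem_Fideal hCnn hBor hi hρ heC he₀)
  · have := hce i₀
    omega

theorem X_pow_mul_mem_Fideal (hCnn : ∀ c ∈ C, ∀ i, 0 ≤ (c i : ℤ) + ρ i)
    (hBor : IsBorelSet (A ∪ shiftSet C ρ)) {i i₀ : Fin n} (hi : i < i₀) (hρ : 0 < ρ i₀)
    {f : MvPolynomial (Fin n) K} (hf : f ∈ monomialSpan K (A ∪ C ∪ shiftSet C ρ))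
    (hf₀ : ∀ μ ∈ f.support, μ i₀ = 0) : X i ^ (ρ i₀).toNat * f ∈ Fideal K A C ρ := by
  rw [f.as_sum, Finset.mul_sum]
  refine Ideal.sum_mem _ fun μ hμ => ?_
  obtain ⟨e, he, heμ⟩ := mem_monomialSpan.mp hf μ hμ
  rw [← mul_one (coeff μ f), ← C_mul_monomial, mul_left_comm]
  exact Ideal.mul_mem_left _ _
    (X_pow_mul_monomial_mem_Fideal hCnn hBor hi hρ (hf₀ μ hμ) he heμ)

theorem map_satIdeal_initialIdeal_le_satVar {d : ℕ} (hB : IsBinomialSystem d A C ρ)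
    (lt : (Fin n → ℕ) → (Fin n → ℕ) → Prop) {l m : ℕ} (hlm : l ≤ m) (hmn : m ≤ n)
    {i₀ : Fin n} (hi₀ : (i₀ : ℕ) = l) (hρ : 0 < ρ i₀) (i : Fin m) (hi : (i : ℕ) < l) :
    Ideal.map (inclAlg K hlm)
        (satIdeal (Ideal.comap (inclAlg K (hlm.trans hmn)) (initialIdeal lt (Fideal K A C ρ)))) ≤
      satVar (Ideal.comap (inclAlg K hmn) (Fideal K A C ρ)) i := by
  obtain ⟨-, -, hCnn, -, -, -, -, -, hBor⟩ := hB
  refine Ideal.map_le_iff_le_comap.mpr fun g hg => Ideal.mem_comap.mpr ?_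
  obtain ⟨t, hgt⟩ := mem_satIdeal.mp hg
  let i' : Fin l := ⟨i, hi⟩
  have hin : inclAlg K (hlm.trans hmn) (X i' ^ t * g) ∈ initialIdeal lt (Fideal K A C ρ) := by
    rw [mul_comm]
    exact Submodule.mem_colon.mp hgt _
      (Ideal.pow_mem_pow (Ideal.subset_span (Set.mem_range_self i')) t)
  have hF := X_pow_mul_mem_Fideal hCnn hBor (i := Fin.castLE hmn i)
    (by simpa [Fin.lt_def, hi₀] using hi) hρ
    (initialIdeal_le_monomialSpan (Fideal_le_monomialSpan hCnn) hin)
    fun μ hμ => support_inclAlg_apply_eq_zero _ _ hμ hi₀.ge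
  refine Submodule.mem_iSup_of_mem ((ρ i₀).toNat + t) (Ideal.mem_colon_span_singleton.mpr ?_)
  rw [Ideal.mem_comap, map_mul, map_pow, inclAlg_X, inclAlg_inclAlg]
  convert hF using 1
  rw [map_mul, map_pow, inclAlg_X, pow_add, show Fin.castLE _ i' = Fin.castLE hmn i from rfl]
  ring

end BinomialSystem

theorem stmt19_general {K : Type*} [Field K] {n d : ℕ}
    (A C : Set (Fin n → ℕ)) (ρ : Fin n → ℤ)
    (hB : IsBinomialSystem d A C ρ) (hmp : mPos ρ)
    (m : ℕ) (hm : m = mIdx ρ) (hmn : m ≤ n) :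
    (∀ i : Fin m, (i : ℕ) < m - 1 →
      X i ∈ Ideal.radical (Submodule.colon
        (satIdeal (Ideal.comap (inclAlg K hmn) (Fideal K A C ρ)))
        (Ideal.map (inclAlg K (Nat.sub_le m 1))
          (satIdeal (Ideal.comap (inclAlg K (le_trans (Nat.sub_le m 1) hmn))
            (initialIdeal rlexLT (Fideal K A C ρ))))))) ∧
    moduleDim (MvPolynomial (Fin m) K)
      (idealQuot
        (Ideal.map (inclAlg K (Nat.sub_le m 1))
          (satIdeal (Ideal.comap (inclAlg K (le_trans (Nat.sub_le m 1) hmn))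
            (initialIdeal rlexLT (Fideal K A C ρ)))))
        (satIdeal (Ideal.comap (inclAlg K hmn) (Fideal K A C ρ)))) ≤
      (1 : WithBot (WithTop ℕ)) := by
  obtain ⟨i₀, hi₀, hρ⟩ := hmp
  have hi₀m : (i₀ : ℕ) = m - 1 := by omega
  have hX := fun (i : Fin m) (hi : (i : ℕ) < m - 1) =>
    Ideal.radical_mono (Submodule.colon_mono (le_satIdeal _) subset_rfl)
      (mem_radical_colon_of_le_iSup_colon_pow
        (map_satIdeal_initialIdeal_le_satVar (K := K) hB rlexLT (Nat.sub_le m 1) hmn hi₀m hρ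
          i hi))
  refine ⟨hX, ringKrullDim_quotient_le_one_of_X_mem_radical ⟨m - 1, by omega⟩ fun j hj => ?_⟩
  have hj' : (j : ℕ) < m - 1 := by
    have hne : (j : ℕ) ≠ m - 1 := Fin.val_ne_of_ne hj
    omega
  exact Ideal.radical_mono (colon_le_annihilator_idealQuot _ _) (hX j hj')

/-- with `m = m(ρ)`, every variable `X_i` with `i < m` lies in the radical
of the colon ideal `((F ∩ S_(m))^sat : ((in_rlex F) ∩ S_(m-1))^sat S_(m))`, and the
quotient module `((in_rlex F) ∩ S_(m-1))^sat S_(m) / (F ∩ S_(m))^sat` has dimension ≤ 1. -/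
theorem stmt19 {K : Type*} [Field K] {n d : ℕ}
    (A C : Set (Fin n → ℕ)) (ρ : Fin n → ℤ)
    (hB : IsBinomialSystem d A C ρ) (hmp : mPos ρ)
    (m : ℕ) (hm : m = mIdx ρ) (hm0 : 0 < m) (hmn : m ≤ n) :
    (∀ i : Fin m, (i : ℕ) < m - 1 →
      X i ∈ Ideal.radical (Submodule.colon
        (satIdeal (Ideal.comap (inclAlg K hmn) (Fideal K A C ρ)))
        (Ideal.map (inclAlg K (Nat.sub_le m 1))
          (satIdeal (Ideal.comap (inclAlg K (le_trans (Nat.sub_le m 1) hmn))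
            (initialIdeal rlexLT (Fideal K A C ρ))))))) ∧
    moduleDim (MvPolynomial (Fin m) K)
      (idealQuot
        (Ideal.map (inclAlg K (Nat.sub_le m 1))
          (satIdeal (Ideal.comap (inclAlg K (le_trans (Nat.sub_le m 1) hmn))
            (initialIdeal rlexLT (Fideal K A C ρ)))))
        (satIdeal (Ideal.comap (inclAlg K hmn) (Fideal K A C ρ)))) ≤
      (1 : WithBot (WithTop ℕ)) :=
  stmt19_general A C ρ hB hmp m hm hmn

end Fumasoli
end
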